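/- arXiv:1607.05411 — 5 statements merged into one kernel-verified Lean document; each statement's English description precedes it below -/
import Mathlib

section
/- Let 𝒟_G^m(k) = Ker(Aut G → Aut(𝔍_G/𝔍_G^{k+1})). If σ ∈ 𝒟_G^m(k) and f ∈ 𝔍_G^l, then f^σ − f ∈ 𝔍_G^{k+l}. -/
set_option synthInstance.maxHeartbeats 1000000
set_option maxHeartbeats 1000000
open scoped BigOperators

/-- The set of `SL(m,ℂ)`-representations of a group `G`. -/
abbrev SLRep (G : Type*) [Group G] (m : ℕ) := G →* Matrix.SpecialLinearGroup (Fin m) ℂ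

/-- The `(i,j)`-component function `a_{ij}(x)`. -/
noncomputable def afun {G : Type*} [Group G] (m : ℕ) (i j : Fin m) (x : G) :
    SLRep G m → ℂ :=
  fun ρ => ((ρ x : Matrix.SpecialLinearGroup (Fin m) ℂ) : Matrix (Fin m) (Fin m) ℂ) i j

/-- The `SL(m,ℂ)`-representation algebra `𝔯_ℚ^m(G)`: the ℚ-subalgebra of functions on the
representation variety generated by all component functions. -/
noncomputable def RepAlg (G : Type*) [Group G] (m : ℕ) : Subalgebra ℚ (SLRep G m → ℂ) :=
  Algebra.adjoin ℚ {f | ∃ i j x, f = afun m i j x}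

theorem afun_mem {G : Type*} [Group G] (m : ℕ) (i j : Fin m) (x : G) :
    afun m i j x ∈ RepAlg G m :=
  Algebra.subset_adjoin ⟨i, j, x, rfl⟩

/-- `s_{ij}(x) = a_{ij}(x) - δ_{ij}`. -/
noncomputable def sfun {G : Type*} [Group G] (m : ℕ) (i j : Fin m) (x : G) :
    SLRep G m → ℂ :=
  afun m i j x - if i = j then 1 else 0

theorem sfun_mem {G : Type*} [Group G] (m : ℕ) (i j : Fin m) (x : G) :
    sfun m i j x ∈ RepAlg G m := by
  unfold sfun
  refine sub_mem (afun_mem m i j x) ?_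
  split_ifs
  · exact one_mem _
  · exact zero_mem _

/-- `a_{ij}(x)` as an element of the representation algebra. -/
noncomputable def aEl {G : Type*} [Group G] (m : ℕ) (i j : Fin m) (x : G) : RepAlg G m :=
  ⟨afun m i j x, afun_mem m i j x⟩

/-- `s_{ij}(x)` as an element of the representation algebra. -/
noncomputable def sEl {G : Type*} [Group G] (m : ℕ) (i j : Fin m) (x : G) : RepAlg G m :=
  ⟨sfun m i j x, sfun_mem m i j x⟩

/-- The ideal `𝔍_G` generated by all `s_{ij}(x)`, `x ∈ G`. -/
noncomputable def JId (G : Type*) [Group G] (m : ℕ) : Ideal (RepAlg G m) :=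
  Ideal.span {f | ∃ i j x, f = sEl m i j x}

/-- The ideal generated by the `s_{ij}(x_l)` for a generating family `x`. -/
noncomputable def JIdGen {G : Type*} [Group G] (m n : ℕ) (x : Fin n → G) :
    Ideal (RepAlg G m) :=
  Ideal.span {f | ∃ i j l, f = sEl m i j (x l)}

/-- The pullback action of `σ ∈ Aut G` on functions on the representation variety:
`χ^σ(ρ) = χ(ρ ∘ σ)`. -/
noncomputable def pullback {G : Type*} [Group G] (m : ℕ) (σ : MulAut G) :
    (SLRep G m → ℂ) →ₐ[ℚ] (SLRep G m → ℂ) where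
  toFun χ := fun ρ => χ (ρ.comp σ.toMonoidHom)
  map_one' := rfl
  map_mul' _ _ := rfl
  map_zero' := rfl
  map_add' _ _ := rfl
  commutes' _ := rfl

theorem pullback_afun {G : Type*} [Group G] (m : ℕ) (σ : MulAut G) (i j : Fin m) (x : G) :
    pullback m σ (afun m i j x) = afun m i j (σ x) := rfl

theorem pullback_maps {G : Type*} [Group G] (m : ℕ) (σ : MulAut G) :
    (RepAlg G m).map (pullback m σ) ≤ RepAlg G m := by
  rw [RepAlg, AlgHom.map_adjoin]
  apply Algebra.adjoin_mono
  rintro _ ⟨g, ⟨i, j, x, rfl⟩, rfl⟩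
  exact ⟨i, j, σ x, rfl⟩

/-- The action of `Aut G` on the representation algebra. -/
noncomputable def actA {G : Type*} [Group G] (m : ℕ) (σ : MulAut G) :
    RepAlg G m →ₐ[ℚ] RepAlg G m :=
  ((pullback m σ).comp (RepAlg G m).val).codRestrict (RepAlg G m)
    (fun f => pullback_maps m σ ⟨(f : SLRep G m → ℂ), f.2, rfl⟩)

/-- The filtration `𝒟_G^m(k) = Ker(Aut G → Aut(𝔍_G/𝔍_G^{k+1}))`, described elementwise. -/
noncomputable def Dfil (G : Type*) [Group G] (m k : ℕ) : Set (MulAut G) :=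
  {σ | ∀ f ∈ JId G m, actA m σ f - f ∈ JId G m ^ (k + 1)}

theorem D_act_pow_aux {G : Type*} [Group G] (m k : ℕ)
    (σ : MulAut G) (hσ : σ ∈ Dfil G m k) :
    ∀ l : ℕ, ∀ f ∈ JId G m ^ (l + 1), actA m σ f - f ∈ JId G m ^ (k + (l + 1)) := by
  intro l
  induction l with
  | zero =>
    intro f hf
    rw [pow_one] at hf
    exact hσ f hf
  | succ n ih =>
    intro f hf
    rw [pow_succ] at hf
    refine Submodule.mul_induction_on hf ?_ ?_
    · intro a ha b hb
      have hσb : actA m σ b ∈ JId G m := by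
        have h1 : actA m σ b - b ∈ JId G m := by
          have := hσ b hb
          exact Ideal.pow_le_self (Nat.succ_ne_zero k) this
        have : actA m σ b = (actA m σ b - b) + b := by ring
        rw [this]; exact add_mem h1 hb
      have key : actA m σ (a * b) - a * b =
          (actA m σ a - a) * actA m σ b + a * (actA m σ b - b) := by
        rw [map_mul]; ring
      rw [key]
      refine add_mem ?_ ?_
      · have h1 : (actA m σ a - a) * actA m σ b ∈
            JId G m ^ (k + (n + 1)) * JId G m :=
          Ideal.mul_mem_mul (ih a ha) hσb
        rw [← pow_succ] at h1
        exact h1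
      · have h1 : a * (actA m σ b - b) ∈ JId G m ^ (n + 1) * JId G m ^ (k + 1) :=
          Ideal.mul_mem_mul ha (hσ b hb)
        rw [← pow_add] at h1
        convert h1 using 2
        omega
    · intro a b ha hb
      have : actA m σ (a + b) - (a + b) = (actA m σ a - a) + (actA m σ b - b) := by
        rw [map_add]; ring
      rw [this]
      exact add_mem ha hb

/-- if `σ ∈ 𝒟_G^m(k)` and `f ∈ 𝔍_G^l`, then `f^σ − f ∈ 𝔍_G^{k+l}`. -/
theorem D_act_pow {G : Type*} [Group G] (m k l : ℕ) (hm : 2 ≤ m) (hk : 1 ≤ k) (hl : 1 ≤ l)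
    (σ : MulAut G) (hσ : σ ∈ Dfil G m k) (f : RepAlg G m) (hf : f ∈ JId G m ^ l) :
    actA m σ f - f ∈ JId G m ^ (k + l) := by
  obtain ⟨l', rfl⟩ : ∃ l', l = l' + 1 := ⟨l - 1, by omega⟩
  exact D_act_pow_aux m k σ hσ l' f hf
end

section
/- The filtration 𝒟_G^m(k) = Ker(Aut G → Aut(𝔍_G/𝔍_G^{k+1})) is central: for all k, l ≥ 1 one has [𝒟_G^m(k), 𝒟_G^m(l)] ⊆ 𝒟_G^m(k+l). -/
set_option synthInstance.maxHeartbeats 1000000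
set_option maxHeartbeats 1000000
open scoped BigOperators
open scoped commutatorElement

/-!
By the cocycle identity `σ(ab) - ab = (σa - a)·σb + a·(σb - b)`, an automorphism acting trivially
on `𝔍/𝔍^{k+1}` moves `𝔍^{n+1}` only by `𝔍^{k+n+1}`. Writing `f = τσg`, the commutator moves `f` by
`στg - τσg = (σ - 1)(τ - 1)g - (τ - 1)(σ - 1)g`, which therefore lies in `𝔍^{k+l+1}`.
-/

namespace Ideal

/-- The kernel of the action of `M` on `J / J ^ (k + 1)`. -/
def quotPowActionKer {M R : Type*} [Monoid M] [CommRing R] [MulSemiringAction M R]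
    (J : Ideal R) (k : ℕ) : Set M :=
  {σ | ∀ f ∈ J, σ • f - f ∈ J ^ (k + 1)}

section

variable {M R : Type*} [Monoid M] [CommRing R] [MulSemiringAction M R] {J : Ideal R}
  {k : ℕ} {σ : M}

theorem smul_mem_of_mem_quotPowActionKer (hσ : σ ∈ J.quotPowActionKer k) {f : R}
    (hf : f ∈ J) : σ • f ∈ J := by
  have hdiff : σ • f - f ∈ J := pow_le_self k.succ_ne_zero (hσ f hf)
  simpa using add_mem hdiff hf

theorem smul_sub_self_mem_pow_of_mem_quotPowActionKer (hσ : σ ∈ J.quotPowActionKer k) :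
    ∀ n, ∀ f ∈ J ^ (n + 1), σ • f - f ∈ J ^ (k + n + 1) := by
  intro n
  induction n with
  | zero =>
    intro f hf
    rw [zero_add, pow_one] at hf
    exact hσ f hf
  | succ n ih =>
    intro f hf
    rw [pow_succ] at hf
    refine Submodule.mul_induction_on hf (fun a ha b hb => ?_) (fun x y hx hy => ?_)
    · have hcocycle : σ • (a * b) - a * b = (σ • a - a) * σ • b + a * (σ • b - b) := by
        rw [smul_mul']; ring
      have hleft : (σ • a - a) * σ • b ∈ J ^ (k + n + 1) * J :=
        mul_mem_mul (ih a ha) (smul_mem_of_mem_quotPowActionKer hσ hb)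
      have hright : a * (σ • b - b) ∈ J ^ (n + 1) * J ^ (k + 1) := mul_mem_mul ha (hσ b hb)
      rw [← pow_succ] at hleft
      rw [← pow_add, show n + 1 + (k + 1) = k + (n + 1) + 1 by omega] at hright
      rw [hcocycle]
      exact add_mem hleft hright
    · rw [smul_add, add_sub_add_comm]
      exact add_mem hx hy

end

theorem commutatorElement_mem_quotPowActionKer {Γ R : Type*} [Group Γ] [CommRing R]
    [MulSemiringAction Γ R] {J : Ideal R} (hJ : ∀ (g : Γ), ∀ f ∈ J, g • f ∈ J) {k l : ℕ}
    {σ τ : Γ} (hσ : σ ∈ J.quotPowActionKer k) (hτ : τ ∈ J.quotPowActionKer l) :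
    ⁅σ, τ⁆ ∈ J.quotPowActionKer (k + l) := by
  intro f hf
  set g := σ⁻¹ • τ⁻¹ • f
  have hg : g ∈ J := hJ _ _ (hJ _ _ hf)
  have hcomm : ⁅σ, τ⁆ • f = σ • τ • g := by simp only [g, commutatorElement_def, mul_smul]
  have hf_eq : τ • σ • g = f := by simp only [g, smul_inv_smul]
  have hsplit : ⁅σ, τ⁆ • f - f
      = (σ • (τ • g - g) - (τ • g - g)) - (τ • (σ • g - g) - (σ • g - g)) := by
    rw [hcomm, ← hf_eq, smul_sub, smul_sub]
    abel
  have hστ := smul_sub_self_mem_pow_of_mem_quotPowActionKer hσ l _ (hτ g hg)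
  have hτσ := smul_sub_self_mem_pow_of_mem_quotPowActionKer hτ k _ (hσ g hg)
  rw [add_comm l k] at hτσ
  rw [hsplit]
  exact sub_mem hστ hτσ

end Ideal

noncomputable instance RepAlg.instMulSemiringAction {G : Type*} [Group G] (m : ℕ) :
    MulSemiringAction (MulAut G) (RepAlg G m) where
  smul σ f := actA m σ f
  one_smul _ := rfl
  mul_smul _ _ _ := rfl
  smul_zero σ := map_zero (actA m σ)
  smul_add σ := map_add (actA m σ)
  smul_one σ := map_one (actA m σ)
  smul_mul σ := map_mul (actA m σ)

theorem actA_sEl {G : Type*} [Group G] (m : ℕ) (σ : MulAut G) (i j : Fin m) (x : G) :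
    actA m σ (sEl m i j x) = sEl m i j (σ x) := by
  apply Subtype.ext
  funext ρ
  show sfun m i j x (ρ.comp σ.toMonoidHom) = sfun m i j (σ x) ρ
  simp only [sfun, afun, Pi.sub_apply]
  split_ifs <;> rfl

theorem actA_mem_JId {G : Type*} [Group G] {m : ℕ} (σ : MulAut G) {f : RepAlg G m}
    (hf : f ∈ JId G m) : actA m σ f ∈ JId G m := by
  induction hf using Submodule.span_induction with
  | mem g hg =>
    obtain ⟨i, j, x, rfl⟩ := hg
    rw [actA_sEl]
    exact Ideal.subset_span ⟨i, j, σ x, rfl⟩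
  | zero => rw [map_zero]; exact zero_mem _
  | add a b _ _ ha hb => rw [map_add]; exact add_mem ha hb
  | smul r a _ ha => rw [smul_eq_mul, map_mul]; exact Ideal.mul_mem_left _ _ ha

theorem Dfil_eq_quotPowActionKer (G : Type*) [Group G] (m k : ℕ) :
    Dfil G m k = (JId G m).quotPowActionKer k := rfl

theorem D_central_general {G : Type*} [Group G] (m k l : ℕ)
    (σ τ : MulAut G) (hσ : σ ∈ Dfil G m k) (hτ : τ ∈ Dfil G m l) :
    ⁅σ, τ⁆ ∈ Dfil G m (k + l) := by
  rw [Dfil_eq_quotPowActionKer] at hσ hτ ⊢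
  exact Ideal.commutatorElement_mem_quotPowActionKer actA_mem_JId hσ hτ

/-- the filtration `𝒟_G^m(k)` is central:
`[𝒟_G^m(k), 𝒟_G^m(l)] ⊆ 𝒟_G^m(k+l)`. -/
theorem D_central {G : Type*} [Group G] (m k l : ℕ) (hm : 2 ≤ m) (hk : 1 ≤ k) (hl : 1 ≤ l)
    (σ τ : MulAut G) (hσ : σ ∈ Dfil G m k) (hτ : τ ∈ Dfil G m l) :
    ⁅σ, τ⁆ ∈ Dfil G m (k + l) :=
  D_central_general m k l σ τ hσ hτ
end

section
/- For any k ≥ 1 and any element y in the k-th term Γ_G(k) of the lower central series of G, and any 1 ≤ i,j ≤ m, one has s_{ij}(y) ∈ 𝔍_G^k. -/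
set_option synthInstance.maxHeartbeats 1000000
set_option maxHeartbeats 1000000
open scoped BigOperators

/-
The matrices `a(x) = (a_{ij}(x))` over the representation algebra form a homomorphism
`a : G →* Mₘ(𝔯)`, and `s_{ij}(x) ∈ I` for all `i, j` says that `a(x) ≡ 1 mod I`. These `x`
form a subgroup `K(I)`, the kernel of reduction modulo `I`. Since `⁅z, g⁆ = (zg)(gz)⁻¹` and
`a(zg) - a(gz) = (a(z) - 1)(a(g) - 1) - (a(g) - 1)(a(z) - 1)`, one gets
`⁅K(I), K(J)⁆ ≤ K(IJ)`. As `K(𝔍_G) = G`, induction along the lower central series gives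
`Γ_G(k+1) ≤ K(𝔍_G^{k+1})`.
-/

namespace Ideal

variable {n R : Type*} [Fintype n] [DecidableEq n] [CommRing R]

theorem mul_mem_matrix_mul {I J : Ideal R} {M N : Matrix n n R} (hM : M ∈ I.matrix n)
    (hN : N ∈ J.matrix n) : M * N ∈ (I * J).matrix n := fun i j =>
  Ideal.sum_mem _ fun h _ => Ideal.mul_mem_mul (hM i h) (hN h j)

theorem mul_mem_matrix_right {I : Ideal R} {M : Matrix n n R} (hM : M ∈ I.matrix n)
    (N : Matrix n n R) : M * N ∈ I.matrix n := fun i _ =>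
  Ideal.sum_mem _ fun h _ => I.mul_mem_right _ (hM i h)

end Ideal

section CongrKernel

open scoped commutatorElement

variable {G n R : Type*} [Group G] [Fintype n] [DecidableEq n] [CommRing R]

def congrKernel (A : G →* Matrix n n R) (I : Ideal R) : Subgroup G :=
  ((Ideal.Quotient.mk I).mapMatrix.toMonoidHom.comp A).toHomUnits.ker

theorem mem_congrKernel {A : G →* Matrix n n R} {I : Ideal R} {x : G} :
    x ∈ congrKernel A I ↔ A x - 1 ∈ I.matrix n := by
  rw [congrKernel, MonoidHom.mem_ker, Units.ext_iff, Ideal.mem_matrix, MonoidHom.coe_toHomUnits,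
    Units.val_one, ← map_one (Ideal.Quotient.mk I).mapMatrix]
  simp only [MonoidHom.comp_apply, RingHom.toMonoidHom_eq_coe, MonoidHom.coe_coe,
    RingHom.mapMatrix_apply, ← Matrix.ext_iff, Matrix.map_apply, Ideal.Quotient.eq,
    Matrix.sub_apply]

theorem commutator_congrKernel_le (A : G →* Matrix n n R) (I J : Ideal R) :
    ⁅congrKernel A I, congrKernel A J⁆ ≤ congrKernel A (I * J) := by
  rw [Subgroup.commutator_le]
  intro z hz g hg
  rw [mem_congrKernel] at hz hg ⊢
  have hzg : A (z * g) - A (g * z) ∈ (I * J).matrix n := by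
    have hgz := Ideal.mul_mem_matrix_mul hg hz
    rw [mul_comm J I] at hgz
    convert sub_mem (Ideal.mul_mem_matrix_mul hz hg) hgz using 1
    simp only [map_mul]
    noncomm_ring
  have hcomm : A (⁅z, g⁆ : G) - 1 = (A (z * g) - A (g * z)) * A (g * z)⁻¹ := by
    rw [sub_mul, ← map_mul, ← map_mul, mul_inv_cancel, map_one, commutatorElement_def,
      mul_inv_rev, ← mul_assoc]
  rw [hcomm]
  exact Ideal.mul_mem_matrix_right hzg _

theorem lowerCentralSeries_le_congrKernel (A : G →* Matrix n n R) {J : Ideal R} {S : Subgroup G}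
    (hS : S ≤ congrKernel A J) (k : ℕ) : S.lowerCentralSeries k ≤ congrKernel A (J ^ (k + 1)) := by
  induction k with
  | zero => simpa using hS
  | succ k ih =>
    calc ⁅S.lowerCentralSeries k, S⁆ ≤ ⁅congrKernel A (J ^ (k + 1)), congrKernel A J⁆ :=
          Subgroup.commutator_mono ih hS
      _ ≤ congrKernel A (J ^ (k + 1 + 1)) := pow_succ J (k + 1) ▸ commutator_congrKernel_le A _ _

end CongrKernel

section RepresentationAlgebra

variable {G : Type*} [Group G] (m : ℕ)

noncomputable def repMatrix : G →* Matrix (Fin m) (Fin m) (RepAlg G m) where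
  toFun x := Matrix.of (aEl m · · x)
  map_one' := by
    ext i j ρ
    simp only [aEl, afun, Matrix.of_apply, map_one, Matrix.SpecialLinearGroup.coe_one,
      Matrix.one_apply]
    split_ifs <;> rfl
  map_mul' x y := by
    ext i j ρ
    simp [aEl, afun, Matrix.mul_apply]

theorem sEl_eq_repMatrix_sub_one (i j : Fin m) (x : G) :
    sEl m i j x = (repMatrix m x - 1) i j := by
  apply Subtype.ext
  funext ρ
  simp [sEl, sfun, aEl, repMatrix, Matrix.one_apply, apply_ite Subtype.val]

theorem congrKernel_JId_eq_top : congrKernel (repMatrix m) (JId G m) = ⊤ :=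
  eq_top_iff.2 fun x _ => mem_congrKernel.2 fun i j =>
    sEl_eq_repMatrix_sub_one m i j x ▸ Ideal.subset_span ⟨i, j, x, rfl⟩

end RepresentationAlgebra

theorem sEl_lowerCentral_general {G : Type*} [Group G] (m : ℕ) (k : ℕ)
    (y : G) (hy : y ∈ Subgroup.lowerCentralSeries (⊤ : Subgroup G) k) (i j : Fin m) :
    sEl m i j y ∈ JId G m ^ (k + 1) := by
  have hΓ := lowerCentralSeries_le_congrKernel (repMatrix m)
    (congrKernel_JId_eq_top (G := G) m).ge k
  rw [sEl_eq_repMatrix_sub_one]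
  exact mem_congrKernel.1 (hΓ hy) i j

/-- for `y` in the `(k+1)`-st term `Γ_G(k+1) = lowerCentralSeries G k` of the
lower central series, `s_{ij}(y) ∈ 𝔍_G^{k+1}`. -/
theorem sEl_lowerCentral {G : Type*} [Group G] (m : ℕ) (hm : 2 ≤ m) (k : ℕ)
    (y : G) (hy : y ∈ Subgroup.lowerCentralSeries (⊤ : Subgroup G) k) (i j : Fin m) :
    sEl m i j y ∈ JId G m ^ (k + 1) :=
  sEl_lowerCentral_general m k y hy i j
end

section
/- For any k ≥ 1 and m ≥ 2, the filtration terms are nested in m: 𝒟_G^{m+1}(k) ⊆ 𝒟_G^m(k), where 𝒟_G^m(k) is the kernel of the Aut(G)-action on 𝔍_G/𝔍_G^{k+1} in the SL(m,ℂ)-representation algebra. -/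
/-!
Restricting functions along `ρ ↦ diag(ρ, 1)` gives an `Aut G`-equivariant algebra map
`𝔯^{m+1}(G) → 𝔯^m(G)` that sends `s_{ij}(x)` to `s_{ij}(x)` for `i, j < m` and to `0` otherwise,
hence maps `𝔍^{m+1}` into `𝔍^m`. So every `σ ∈ 𝒟^{m+1}(k)` moves each generator `s_{ij}(x)` of
`𝔍^m` by an element of `(𝔍^m)^{k+1}`. As `a_{ij}(x) = s_{ij}(x) + δ_{ij}` generate `𝔯^m(G)`, `σ`
then moves every element of `𝔯^m(G)` by an element of `(𝔍^m)^k`, and the identity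
`σ(r f) - r f = σ(r) (σ f - f) + (σ r - r) f` spreads the condition from the generators to all
of `𝔍^m`.
-/

set_option synthInstance.maxHeartbeats 1000000
set_option maxHeartbeats 1000000
open scoped BigOperators

theorem AlgHom.sub_mem_of_adjoin_eq_top {R A : Type*} [CommRing R] [CommRing A] [Algebra R A]
    (φ : A →ₐ[R] A) {I : Ideal A} {s : Set A} (hs : Algebra.adjoin R s = ⊤)
    (h : ∀ a ∈ s, φ a - a ∈ I) (a : A) : φ a - a ∈ I := by
  have hle : Algebra.adjoin R s ≤
      AlgHom.equalizer ((Ideal.Quotient.mkₐ R I).comp φ) (Ideal.Quotient.mkₐ R I) :=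
    Algebra.adjoin_le fun b hb => (Ideal.Quotient.mk_eq_mk_iff_sub_mem _ _).2 (h b hb)
  exact (Ideal.Quotient.mk_eq_mk_iff_sub_mem _ _).1 (hle (hs ▸ Algebra.mem_top))

theorem Ideal.sub_mem_span_pow_succ {R F : Type*} [CommRing R] [FunLike F R R] [RingHomClass F R R]
    (φ : F) {S : Set R} {k : ℕ} (hR : ∀ r, φ r - r ∈ Ideal.span S ^ k)
    (hS : ∀ s ∈ S, φ s - s ∈ Ideal.span S ^ (k + 1)) {f : R} (hf : f ∈ Ideal.span S) :
    φ f - f ∈ Ideal.span S ^ (k + 1) := by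
  induction hf using Submodule.span_induction with
  | mem s hs => exact hS s hs
  | zero => simp
  | add a b _ _ ha hb =>
    rw [map_add, add_sub_add_comm]
    exact add_mem ha hb
  | smul r a ha hpa =>
    have hsplit : φ (r * a) - r * a = φ r * (φ a - a) + (φ r - r) * a := by
      rw [map_mul]; ring
    rw [smul_eq_mul, hsplit, pow_succ]
    exact add_mem (Ideal.mul_mem_left _ _ hpa) (Ideal.mul_mem_mul (hR r) ha)

namespace Matrix

variable {R : Type*} [CommRing R] {m : ℕ}

/-- `diag(A, 1)`, the new index being `Fin.last m`. -/
def extendByOne (A : Matrix (Fin m) (Fin m) R) : Matrix (Fin (m + 1)) (Fin (m + 1)) R :=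
  reindex finSumFinEquiv finSumFinEquiv (fromBlocks A 0 0 1)

theorem extendByOne_one : extendByOne (1 : Matrix (Fin m) (Fin m) R) = 1 := by
  simp [extendByOne, fromBlocks_one]

theorem extendByOne_mul (A B : Matrix (Fin m) (Fin m) R) :
    extendByOne (A * B) = extendByOne A * extendByOne B := by
  simp [extendByOne, submatrix_mul_equiv, fromBlocks_multiply]

theorem det_extendByOne (A : Matrix (Fin m) (Fin m) R) : (extendByOne A).det = A.det := by
  simp [extendByOne]

theorem extendByOne_apply_castSucc (A : Matrix (Fin m) (Fin m) R) (i j : Fin m) :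
    extendByOne A i.castSucc j.castSucc = A i j := by
  simp [extendByOne, finSumFinEquiv_symm_apply_castSucc]

theorem extendByOne_apply_of_last (A : Matrix (Fin m) (Fin m) R) {i j : Fin (m + 1)}
    (h : i = Fin.last m ∨ j = Fin.last m) :
    extendByOne A i j = (1 : Matrix (Fin (m + 1)) (Fin (m + 1)) R) i j := by
  rcases h with rfl | rfl
  · induction j using Fin.lastCases <;>
      simp [extendByOne, finSumFinEquiv_symm_apply_castSucc, (Fin.castSucc_ne_last _).symm]
  · induction i using Fin.lastCases <;>
      simp [extendByOne, finSumFinEquiv_symm_apply_castSucc]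

def SpecialLinearGroup.extendByOne :
    SpecialLinearGroup (Fin m) R →* SpecialLinearGroup (Fin (m + 1)) R where
  toFun A := ⟨Matrix.extendByOne A, by rw [det_extendByOne, A.2]⟩
  map_one' := by ext1; simp [extendByOne_one]
  map_mul' A B := by
    ext1
    simp only [SpecialLinearGroup.coe_mul, extendByOne_mul]
    rfl

end Matrix

section RepAlg

variable {G : Type*} [Group G]

theorem adjoin_aEl_eq_top (m : ℕ) :
    Algebra.adjoin ℚ {f | ∃ i j x, f = aEl (G := G) m i j x} = ⊤ := by
  have hgen : ((↑) : RepAlg G m → SLRep G m → ℂ) ⁻¹' {f | ∃ i j x, f = afun m i j x} =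
      {f | ∃ i j x, f = aEl m i j x} := by
    ext f
    simp [aEl, Subtype.ext_iff]
  rw [← hgen]
  exact Algebra.adjoin_adjoin_coe_preimage

theorem aEl_eq_sEl_add (m : ℕ) (i j : Fin m) (x : G) :
    aEl m i j x = sEl m i j x + if i = j then 1 else 0 := by
  apply Subtype.ext
  split_ifs <;> simp [aEl, sEl, sfun, *]

theorem actA_aEl_sub (m : ℕ) (σ : MulAut G) (i j : Fin m) (x : G) :
    actA m σ (aEl m i j x) - aEl m i j x = actA m σ (sEl m i j x) - sEl m i j x := by
  rw [aEl_eq_sEl_add, map_add, apply_ite (actA m σ), map_one, map_zero]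
  ring

theorem mem_Dfil_of_sEl {m k : ℕ} {σ : MulAut G}
    (h : ∀ i j x, actA m σ (sEl m i j x) - sEl m i j x ∈ JId G m ^ (k + 1)) :
    σ ∈ Dfil G m k := by
  have hR : ∀ r, actA m σ r - r ∈ JId G m ^ k := by
    refine (actA m σ).sub_mem_of_adjoin_eq_top (adjoin_aEl_eq_top m) ?_
    rintro _ ⟨i, j, x, rfl⟩
    rw [actA_aEl_sub]
    exact Ideal.pow_le_pow_right k.le_succ (h i j x)
  intro f hf
  refine Ideal.sub_mem_span_pow_succ (actA m σ) hR ?_ hf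
  rintro _ ⟨i, j, x, rfl⟩
  exact h i j x

end RepAlg

section Restriction

open Matrix

variable {G : Type*} [Group G] {m : ℕ}

variable (G m) in
noncomputable def restrictFun : (SLRep G (m + 1) → ℂ) →ₐ[ℚ] (SLRep G m → ℂ) where
  toFun χ := fun ρ => χ (SpecialLinearGroup.extendByOne.comp ρ)
  map_one' := rfl
  map_mul' _ _ := rfl
  map_zero' := rfl
  map_add' _ _ := rfl
  commutes' _ := rfl

theorem restrictFun_afun_castSucc (i j : Fin m) (x : G) :
    restrictFun G m (afun (m + 1) i.castSucc j.castSucc x) = afun m i j x :=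
  funext fun ρ => extendByOne_apply_castSucc (ρ x : Matrix (Fin m) (Fin m) ℂ) i j

theorem restrictFun_afun_of_last {i j : Fin (m + 1)} (h : i = Fin.last m ∨ j = Fin.last m)
    (x : G) : restrictFun G m (afun (m + 1) i j x) = if i = j then 1 else 0 := by
  funext ρ
  have hρ := extendByOne_apply_of_last (ρ x : Matrix (Fin m) (Fin m) ℂ) h
  rw [one_apply] at hρ
  split_ifs at hρ ⊢ <;> exact hρ

theorem restrictFun_sfun_castSucc (i j : Fin m) (x : G) :
    restrictFun G m (sfun (m + 1) i.castSucc j.castSucc x) = sfun m i j x := by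
  simp only [sfun, map_sub, restrictFun_afun_castSucc, Fin.castSucc_inj,
    apply_ite (restrictFun G m), map_one, map_zero]

theorem restrictFun_sfun_of_last {i j : Fin (m + 1)} (h : i = Fin.last m ∨ j = Fin.last m)
    (x : G) : restrictFun G m (sfun (m + 1) i j x) = 0 := by
  rw [sfun, map_sub, restrictFun_afun_of_last h, apply_ite (restrictFun G m), map_one, map_zero,
    sub_self]

theorem restrictFun_sfun_eq_or_eq_zero (i j : Fin (m + 1)) (x : G) :
    (∃ i' j', restrictFun G m (sfun (m + 1) i j x) = sfun m i' j' x) ∨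
      restrictFun G m (sfun (m + 1) i j x) = 0 := by
  rcases Fin.eq_castSucc_or_eq_last i with ⟨i', rfl⟩ | hi
  · rcases Fin.eq_castSucc_or_eq_last j with ⟨j', rfl⟩ | hj
    · exact .inl ⟨i', j', restrictFun_sfun_castSucc i' j' x⟩
    · exact .inr (restrictFun_sfun_of_last (.inr hj) x)
  · exact .inr (restrictFun_sfun_of_last (.inl hi) x)

theorem restrictFun_mem {f : SLRep G (m + 1) → ℂ} (hf : f ∈ RepAlg G (m + 1)) :
    restrictFun G m f ∈ RepAlg G m := by
  refine Algebra.adjoin_le (S := (RepAlg G m).comap (restrictFun G m)) ?_ hf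
  rintro _ ⟨i, j, x, rfl⟩
  have hconst : (if i = j then 1 else 0 : SLRep G m → ℂ) ∈ RepAlg G m := by
    split_ifs
    exacts [one_mem _, zero_mem _]
  have hsplit : afun (m + 1) i j x = sfun (m + 1) i j x + if i = j then 1 else 0 := by
    rw [sfun, sub_add_cancel]
  rw [SetLike.mem_coe, Subalgebra.mem_comap, hsplit, map_add, apply_ite (restrictFun G m),
    map_one, map_zero]
  refine add_mem ?_ hconst
  rcases restrictFun_sfun_eq_or_eq_zero i j x with ⟨i', j', h⟩ | h <;> rw [h]
  exacts [sfun_mem m i' j' x, zero_mem _]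

variable (G m) in
noncomputable def restrictRepAlg : RepAlg G (m + 1) →ₐ[ℚ] RepAlg G m :=
  ((restrictFun G m).comp (RepAlg G (m + 1)).val).codRestrict (RepAlg G m)
    fun f => restrictFun_mem f.2

theorem restrictRepAlg_actA (σ : MulAut G) (f : RepAlg G (m + 1)) :
    restrictRepAlg G m (actA (m + 1) σ f) = actA m σ (restrictRepAlg G m f) :=
  rfl

theorem restrictRepAlg_sEl_castSucc (i j : Fin m) (x : G) :
    restrictRepAlg G m (sEl (m + 1) i.castSucc j.castSucc x) = sEl m i j x :=
  Subtype.ext (restrictFun_sfun_castSucc i j x)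

theorem map_restrictRepAlg_JId_le : (JId G (m + 1)).map (restrictRepAlg G m) ≤ JId G m := by
  rw [JId, Ideal.map_span, Ideal.span_le]
  rintro _ ⟨_, ⟨i, j, x, rfl⟩, rfl⟩
  rcases restrictFun_sfun_eq_or_eq_zero i j x with ⟨i', j', h⟩ | h
  · have : restrictRepAlg G m (sEl (m + 1) i j x) = sEl m i' j' x := Subtype.ext h
    rw [this]
    exact Ideal.subset_span ⟨i', j', x, rfl⟩
  · have : restrictRepAlg G m (sEl (m + 1) i j x) = 0 := Subtype.ext h
    rw [this]
    exact zero_mem _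

theorem actA_sEl_sub_mem_of_mem_Dfil_succ {k : ℕ} {σ : MulAut G} (hσ : σ ∈ Dfil G (m + 1) k)
    (i j : Fin m) (x : G) : actA m σ (sEl m i j x) - sEl m i j x ∈ JId G m ^ (k + 1) := by
  have h := Ideal.mem_map_of_mem (restrictRepAlg G m)
    (hσ _ (Ideal.subset_span ⟨i.castSucc, j.castSucc, x, rfl⟩))
  rw [Ideal.map_pow, map_sub, restrictRepAlg_actA, restrictRepAlg_sEl_castSucc] at h
  exact Ideal.pow_right_mono map_restrictRepAlg_JId_le (k + 1) h

end Restriction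

theorem D_nested_general {G : Type*} [Group G] (m k : ℕ) :
    Dfil G (m + 1) k ⊆ Dfil G m k :=
  fun _ hσ => mem_Dfil_of_sEl (actA_sEl_sub_mem_of_mem_Dfil_succ hσ)

/-- the filtrations are nested in `m`: `𝒟_G^{m+1}(k) ⊆ 𝒟_G^m(k)`. -/
theorem D_nested {G : Type*} [Group G] (m k : ℕ) (hm : 2 ≤ m) (hk : 1 ≤ k) :
    Dfil G (m + 1) k ⊆ Dfil G m k :=
  D_nested_general m k
end

section
/- For the free abelian group H of rank n, the images s_{ij}(x̄_l) for 1 ≤ i,j ≤ m with (i,j) ≠ (m,m) and 1 ≤ l ≤ n form a ℚ-basis of gr¹(𝔍_H) = 𝔍_H/𝔍_H²; in particular gr¹(𝔍_H) ≅ H_ℚ^{⊕(m²−1)} and has dimension (m²−1)n. -/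
/-!
Spanning: the cocycle identity `s(gh) = s(g) + s(h) + s(g) s(h)` (matrix product) shows that `𝔍_H`
is generated by the `s_ij(x_l)`, and every element of `𝔯_ℚ^m(H)` is a rational constant modulo
`𝔍_H`, so modulo `𝔍_H²` the ideal is already the ℚ-span of the `s_ij(x_l)`. Since `det = 1`, to
first order the trace `∑ᵢ sᵢᵢ(x_l)` vanishes, which eliminates `s_mm(x_l)`.

Independence: a one-parameter subgroup `φ` of `SL(m,ℂ)` with tangent `A` and a coordinate `l` give
the curve of representations `z ↦ (x_k ↦ φ(z δ_kl))` through the trivial representation, where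
`𝔍_H` vanishes. Differentiating at `z = 0` therefore kills `𝔍_H²` and sends `s_ij(x_k)` to
`δ_kl A_ij`; transvections and diagonal exponentials realise the tangents that isolate each
`s_ij(x_l)` with `(i,j) ≠ (m,m)`.
-/

set_option synthInstance.maxHeartbeats 1000000
set_option maxHeartbeats 1000000
open scoped BigOperators

/-- Index set: pairs `(i,j) ≠ (m,m)` together with a generator index `l`. -/
abbrev Eidx (m n : ℕ) :=
  {p : Fin m × Fin m // ((p.1 : ℕ), (p.2 : ℕ)) ≠ (m - 1, m - 1)} × Fin n

/-- The free abelian group `H = ℤⁿ` (written multiplicatively). -/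
abbrev FreeAb (n : ℕ) := Multiplicative (Fin n → ℤ)

/-- The standard basis of `H`. -/
noncomputable def xH (n : ℕ) : Fin n → FreeAb n := fun l => Multiplicative.ofAdd (Pi.single l 1)

section RepresentationAlgebra

variable {G : Type*} [Group G] {m : ℕ}

noncomputable def evalAt (ρ : SLRep G m) : RepAlg G m →ₐ[ℚ] ℂ :=
  (Pi.evalAlgHom ℚ (fun _ : SLRep G m => ℂ) ρ).comp (RepAlg G m).val

theorem RepAlg.ext_evalAt {f g : RepAlg G m} (h : ∀ ρ, evalAt ρ f = evalAt ρ g) : f = g :=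
  Subtype.ext (funext h)

@[simp]
theorem evalAt_aEl (ρ : SLRep G m) (i j : Fin m) (g : G) :
    evalAt ρ (aEl m i j g) = (ρ g : Matrix (Fin m) (Fin m) ℂ) i j := rfl

@[simp]
theorem evalAt_sEl (ρ : SLRep G m) (i j : Fin m) (g : G) :
    evalAt ρ (sEl m i j g) = ((ρ g : Matrix (Fin m) (Fin m) ℂ) - 1) i j := by
  simp only [evalAt, sEl, sfun, afun, AlgHom.coe_comp, Function.comp_apply, Subalgebra.coe_val,
    Pi.evalAlgHom_apply, Pi.sub_apply, Matrix.sub_apply, Matrix.one_apply]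
  split_ifs <;> rfl

theorem sEl_eq_aEl_sub (i j : Fin m) (g : G) :
    sEl m i j g = aEl m i j g - if i = j then 1 else 0 :=
  RepAlg.ext_evalAt fun ρ => by split_ifs <;> simp [*]

theorem sEl_one (i j : Fin m) : sEl m i j (1 : G) = 0 :=
  RepAlg.ext_evalAt fun ρ => by simp

theorem sEl_mul (i j : Fin m) (g h : G) :
    sEl m i j (g * h) = sEl m i j g + sEl m i j h + ∑ k, sEl m i k g * sEl m k j h := by
  refine RepAlg.ext_evalAt fun ρ => ?_
  set M : Matrix (Fin m) (Fin m) ℂ := (ρ g : Matrix (Fin m) (Fin m) ℂ)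
  set N : Matrix (Fin m) (Fin m) ℂ := (ρ h : Matrix (Fin m) (Fin m) ℂ)
  have hMN : M * N - 1 = (M - 1) + (N - 1) + (M - 1) * (N - 1) := by noncomm_ring
  simp only [evalAt_sEl, map_add, map_sum, map_mul, map_mul ρ, Matrix.SpecialLinearGroup.coe_mul]
  rw [hMN, Matrix.add_apply, Matrix.add_apply, Matrix.mul_apply]

theorem sEl_inv (i j : Fin m) (g : G) :
    sEl m i j g⁻¹ = -sEl m i j g - ∑ k, sEl m i k g * sEl m k j g⁻¹ := by
  have h := sEl_mul i j g g⁻¹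
  rw [mul_inv_cancel, sEl_one] at h
  linear_combination -h

theorem sEl_mem_JIdGen {n : ℕ} {x : Fin n → G} (hx : Subgroup.closure (Set.range x) = ⊤)
    (i j : Fin m) (g : G) : sEl m i j g ∈ JIdGen m n x := by
  have hg : g ∈ Subgroup.closure (Set.range x) := hx ▸ Subgroup.mem_top g
  induction hg using Subgroup.closure_induction generalizing i j with
  | mem _ h =>
    obtain ⟨l, rfl⟩ := h
    exact Ideal.subset_span ⟨i, j, l, rfl⟩
  | one => simp [sEl_one]
  | mul g h _ _ ihg ihh =>
    rw [sEl_mul]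
    exact add_mem (add_mem (ihg i j) (ihh i j))
      (Ideal.sum_mem _ fun k _ => Ideal.mul_mem_right _ _ (ihg i k))
  | inv g _ ihg =>
    rw [sEl_inv]
    exact sub_mem (neg_mem (ihg i j))
      (Ideal.sum_mem _ fun k _ => Ideal.mul_mem_right _ _ (ihg i k))

theorem JIdGen_eq_JId {n : ℕ} {x : Fin n → G} (hx : Subgroup.closure (Set.range x) = ⊤) :
    JIdGen m n x = JId G m := by
  apply le_antisymm
  · exact Ideal.span_le.2 fun _ ⟨i, j, l, h⟩ => Ideal.subset_span ⟨i, j, x l, h⟩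
  · exact Ideal.span_le.2 fun _ ⟨i, j, g, h⟩ => h ▸ sEl_mem_JIdGen hx i j g

theorem exists_sub_algebraMap_mem_JId (f : RepAlg G m) :
    ∃ q : ℚ, f - algebraMap ℚ _ q ∈ JId G m := by
  let B : Subalgebra ℚ (RepAlg G m) := (⊥ : Subalgebra ℚ (RepAlg G m ⧸ JId G m)).comap
    (Ideal.Quotient.mkₐ ℚ (JId G m))
  have hB : ∀ f, f ∈ B ↔ ∃ q : ℚ, f - algebraMap ℚ _ q ∈ JId G m := by
    intro f
    simp only [B, Subalgebra.mem_comap, Algebra.mem_bot, Set.mem_range, Ideal.Quotient.mkₐ_eq_mk]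
    exact exists_congr fun q => by rw [← Ideal.Quotient.mk_algebraMap, eq_comm, Ideal.Quotient.eq]
  obtain ⟨f, hf⟩ := f
  rw [← hB]
  induction hf using Algebra.adjoin_induction with
  | mem _ h =>
    obtain ⟨i, j, g, rfl⟩ := h
    refine (hB _).2 ⟨if i = j then 1 else 0, ?_⟩
    change aEl m i j g - _ ∈ _
    rw [apply_ite (algebraMap ℚ _), map_one, map_zero, ← sEl_eq_aEl_sub]
    exact Ideal.subset_span ⟨i, j, g, rfl⟩
  | algebraMap q => exact B.algebraMap_mem q
  | add _ _ _ _ ihf ihg => exact B.add_mem ihf ihg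
  | mul _ _ _ _ ihf ihg => exact B.mul_mem ihf ihg

end RepresentationAlgebra

section FirstOrder

variable {R : Type*} [CommRing R] (I : Ideal R)

theorem Ideal.prod_sub_one_sub_sum_mem_sq {ι : Type*} (s : Finset ι) (f : ι → R)
    (h : ∀ i ∈ s, f i - 1 ∈ I) : ∏ i ∈ s, f i - 1 - ∑ i ∈ s, (f i - 1) ∈ I ^ 2 := by
  classical
  induction s using Finset.induction_on with
  | empty => simp
  | insert a s ha ih =>
    have ih := ih fun i hi => h i (Finset.mem_insert_of_mem hi)
    have hsum : ∑ i ∈ s, (f i - 1) ∈ I :=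
      Ideal.sum_mem _ fun i hi => h i (Finset.mem_insert_of_mem hi)
    have hfa := h a (Finset.mem_insert_self a s)
    rw [Finset.prod_insert ha, Finset.sum_insert ha]
    have key : f a * ∏ i ∈ s, f i - 1 - (f a - 1 + ∑ i ∈ s, (f i - 1)) =
        (∏ i ∈ s, f i - 1 - ∑ i ∈ s, (f i - 1)) + (f a - 1) * ∑ i ∈ s, (f i - 1) +
          (f a - 1) * (∏ i ∈ s, f i - 1 - ∑ i ∈ s, (f i - 1)) := by ring
    rw [key]
    refine add_mem (add_mem ih ?_) (Ideal.mul_mem_left _ _ ih)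
    exact sq I ▸ Ideal.mul_mem_mul hfa hsum

theorem Ideal.prod_mem_sq {ι : Type*} [DecidableEq ι] {s : Finset ι} {f : ι → R} {a b : ι}
    (ha : a ∈ s) (hb : b ∈ s) (hab : a ≠ b) (hfa : f a ∈ I) (hfb : f b ∈ I) :
    ∏ i ∈ s, f i ∈ I ^ 2 := by
  rw [← Finset.mul_prod_erase s f ha,
    ← Finset.mul_prod_erase _ f (Finset.mem_erase.2 ⟨hab.symm, hb⟩), ← mul_assoc, sq]
  exact Ideal.mul_mem_right _ _ (Ideal.mul_mem_mul hfa hfb)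

theorem Matrix.det_sub_one_sub_trace_mem_sq {ι : Type*} [Fintype ι] [DecidableEq ι]
    (M : Matrix ι ι R) (h : ∀ i j, (M - 1) i j ∈ I) : M.det - 1 - (M - 1).trace ∈ I ^ 2 := by
  have hoff : ∀ i j, i ≠ j → M i j ∈ I := fun i j hij => by
    simpa [Matrix.one_apply_ne hij] using h i j
  have hdiag : ∏ i, M i i - 1 - (M - 1).trace ∈ I ^ 2 := by
    simpa [Matrix.trace] using
      Ideal.prod_sub_one_sub_sum_mem_sq I Finset.univ (fun i => M i i) fun i _ => by
        simpa using h i i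
  have hperm : ∀ σ ∈ Finset.univ.erase (1 : Equiv.Perm ι),
      Equiv.Perm.sign σ • ∏ i, M (σ i) i ∈ I ^ 2 := by
    intro σ hσ
    obtain ⟨a, ha⟩ : ∃ a, σ a ≠ a := by
      by_contra! hfix
      exact (Finset.mem_erase.1 hσ).1 (Equiv.ext hfix)
    exact Submodule.smul_of_tower_mem _ _ (Ideal.prod_mem_sq I (Finset.mem_univ a)
      (Finset.mem_univ (σ a)) ha.symm (hoff _ _ ha) (hoff _ _ fun h => ha (σ.injective h)))
  rw [Matrix.det_apply, ← Finset.add_sum_erase _ _ (Finset.mem_univ 1)]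
  convert add_mem hdiag (Ideal.sum_mem _ hperm) using 1
  simp only [Equiv.Perm.sign_one, one_smul, Equiv.Perm.one_apply]
  ring

end FirstOrder

theorem Ideal.restrictScalars_span_le_span_sup_sq {R A : Type*} [CommRing R] [CommRing A]
    [Algebra R A] (S : Set A) (hA : ∀ a : A, ∃ r : R, a - algebraMap R A r ∈ Ideal.span S) :
    (Ideal.span S).restrictScalars R ≤
      Submodule.span R S ⊔ (Ideal.span S ^ 2).restrictScalars R := by
  intro f hf
  induction hf using Submodule.span_induction with
  | mem x hx => exact Submodule.mem_sup_left (Submodule.subset_span hx)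
  | zero => exact zero_mem _
  | add _ _ _ _ hx hy => exact add_mem hx hy
  | smul a x hx ih =>
    obtain ⟨r, hr⟩ := hA a
    have ha : a • x = (a - algebraMap R A r) * x + r • x := by
      rw [smul_eq_mul, Algebra.smul_def]
      ring
    rw [ha]
    exact add_mem (Submodule.mem_sup_right (sq (Ideal.span S) ▸ Ideal.mul_mem_mul hr hx))
      (Submodule.smul_of_tower_mem _ r ih)

theorem Ideal.finrank_map_quotient_sq {K A : Type*} [Field K] [CommRing A] [Algebra K A]
    {J : Ideal A} {ι : Type*} [Fintype ι] (s : ι → A) (hs : ∀ i, s i ∈ J)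
    (hli : ∀ c : ι → K, ∑ i, c i • s i ∈ J ^ 2 → ∀ i, c i = 0)
    (hspan : J.restrictScalars K ≤ Submodule.span K (Set.range s) ⊔ (J ^ 2).restrictScalars K) :
    Module.finrank K ((J.map (Ideal.Quotient.mk (J ^ 2))).restrictScalars K) = Fintype.card ι := by
  let π := (Ideal.Quotient.mkₐ K (J ^ 2)).toLinearMap
  have hmap : (J.map (Ideal.Quotient.mk (J ^ 2))).restrictScalars K =
      Submodule.span K (Set.range (π ∘ s)) := by
    refine le_antisymm (fun y hy => ?_) (Submodule.span_le.2 ?_)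
    · obtain ⟨f, hf, rfl⟩ := (Ideal.mem_map_iff_of_surjective _ Ideal.Quotient.mk_surjective).1 hy
      obtain ⟨t, ht, e, he, rfl⟩ := Submodule.mem_sup.1 (hspan hf)
      have hπt : π t ∈ (Submodule.span K (Set.range s)).map π := Submodule.mem_map_of_mem ht
      rw [Submodule.map_span, ← Set.range_comp] at hπt
      rwa [map_add, Ideal.Quotient.eq_zero_iff_mem.2 he, add_zero]
    · rintro _ ⟨i, rfl⟩
      exact Ideal.mem_map_of_mem _ (hs i)
  rw [hmap, finrank_span_eq_card]
  refine Fintype.linearIndependent_iff.2 fun c hc => hli c ?_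
  rw [← Ideal.Quotient.eq_zero_iff_mem]
  change π (∑ i, c i • s i) = 0
  simpa only [map_sum, map_smul, Function.comp_apply] using hc

section Generators

variable {G : Type*} [Group G] {m : ℕ}

theorem det_of_aEl (g : G) : (Matrix.of fun i j => aEl m i j g).det = 1 :=
  RepAlg.ext_evalAt fun ρ => by
    rw [AlgHom.map_det, map_one]
    convert (ρ g).2 using 2
    ext i j
    rfl

theorem sum_sEl_self_mem_JId_sq (g : G) : ∑ i, sEl m i i g ∈ JId G m ^ 2 := by
  set M := Matrix.of fun i j => aEl m i j g
  have hM : ∀ i j, (M - 1) i j = sEl m i j g := fun i j => by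
    simp [M, sEl_eq_aEl_sub, Matrix.one_apply]
  have h := M.det_sub_one_sub_trace_mem_sq (JId G m) fun i j =>
    hM i j ▸ Ideal.subset_span ⟨i, j, g, rfl⟩
  rw [det_of_aEl, sub_self, zero_sub, neg_mem_iff] at h
  simpa [Matrix.trace, hM] using h

theorem JIdGen_le_span_sup_sq {n : ℕ} {x : Fin n → G} (hx : Subgroup.closure (Set.range x) = ⊤) :
    (JIdGen m n x).restrictScalars ℚ ≤
      Submodule.span ℚ (Set.range fun p : Eidx m n => sEl m p.1.1.1 p.1.1.2 (x p.2))
        ⊔ (JIdGen m n x ^ 2).restrictScalars ℚ := by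
  set T := Submodule.span ℚ (Set.range fun p : Eidx m n => sEl m p.1.1.1 p.1.1.2 (x p.2))
    ⊔ (JIdGen m n x ^ 2).restrictScalars ℚ
  have hmem : ∀ (i j : Fin m) (l : Fin n), ((i : ℕ), (j : ℕ)) ≠ (m - 1, m - 1) →
      sEl m i j (x l) ∈ T := fun i j l hij =>
    Submodule.mem_sup_left (Submodule.subset_span ⟨(⟨(i, j), hij⟩, l), rfl⟩)
  have hgen : Submodule.span ℚ {f | ∃ i j l, f = sEl m i j (x l)} ≤ T := by
    refine Submodule.span_le.2 ?_
    rintro _ ⟨i, j, l, rfl⟩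
    by_cases hij : ((i : ℕ), (j : ℕ)) = (m - 1, m - 1)
    · obtain rfl : i = j := Fin.ext (by simp_all)
      have hsplit : sEl m i i (x l) =
          ∑ k, sEl m k k (x l) - ∑ k ∈ Finset.univ.erase i, sEl m k k (x l) := by
        rw [← Finset.add_sum_erase _ _ (Finset.mem_univ i), add_sub_cancel_right]
      rw [hsplit]
      refine sub_mem (Submodule.mem_sup_right ?_) (Submodule.sum_mem _ fun k hk => hmem k k l ?_)
      · simpa [JIdGen_eq_JId hx] using sum_sEl_self_mem_JId_sq (m := m) (x l)
      · have hki : (k : ℕ) ≠ i := Fin.val_ne_of_ne (Finset.ne_of_mem_erase hk)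
        simp_all
    · exact hmem i j l hij
  have hA : ∀ f, ∃ q : ℚ, f - algebraMap ℚ _ q ∈ JIdGen m n x := fun f =>
    (JIdGen_eq_JId hx).symm ▸ exists_sub_algebraMap_mem_JId f
  calc (JIdGen m n x).restrictScalars ℚ
      ≤ Submodule.span ℚ {f | ∃ i j l, f = sEl m i j (x l)}
          ⊔ (JIdGen m n x ^ 2).restrictScalars ℚ :=
        Ideal.restrictScalars_span_le_span_sup_sq _ hA
    _ ≤ T := sup_le hgen le_sup_right

end Generators

section Tangent

variable {G : Type*} [Group G] {m : ℕ} (γ : ℂ → SLRep G m)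
  (hγ : ∀ g i j, DifferentiableAt ℂ (fun z => (γ z g : Matrix (Fin m) (Fin m) ℂ) i j) 0)
include hγ

theorem differentiableAt_evalAt_comp (f : RepAlg G m) :
    DifferentiableAt ℂ (fun z => evalAt (γ z) f) 0 := by
  obtain ⟨f, hf⟩ := f
  change DifferentiableAt ℂ (fun z => f (γ z)) 0
  induction hf using Algebra.adjoin_induction with
  | mem _ h =>
    obtain ⟨i, j, g, rfl⟩ := h
    exact hγ g i j
  | algebraMap q => exact differentiableAt_const _
  | add _ _ _ _ hf hg => exact hf.add hg
  | mul _ _ _ _ hf hg => exact hf.mul hg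

noncomputable def derivAlong : RepAlg G m →ₗ[ℚ] ℂ where
  toFun f := deriv (fun z => evalAt (γ z) f) 0
  map_add' f g := by
    simp only [map_add]
    exact deriv_fun_add (differentiableAt_evalAt_comp γ hγ f)
      (differentiableAt_evalAt_comp γ hγ g)
  map_smul' q f := by
    simp only [map_smul, Rat.smul_def, RingHom.id_apply]
    exact deriv_const_mul _ (differentiableAt_evalAt_comp γ hγ f)

theorem derivAlong_mul (f g : RepAlg G m) :
    derivAlong γ hγ (f * g) =
      derivAlong γ hγ f * evalAt (γ 0) g + evalAt (γ 0) f * derivAlong γ hγ g := by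
  simp only [derivAlong, LinearMap.coe_mk, AddHom.coe_mk, map_mul]
  exact deriv_fun_mul (differentiableAt_evalAt_comp γ hγ f) (differentiableAt_evalAt_comp γ hγ g)

theorem derivAlong_eq_zero_of_mem_sq {f : RepAlg G m}
    (hf : f ∈ RingHom.ker (evalAt (γ 0)) ^ 2) : derivAlong γ hγ f = 0 := by
  rw [sq] at hf
  refine Submodule.mul_induction_on hf (fun a ha b hb => ?_) (fun a b ha hb => ?_)
  · rw [derivAlong_mul, RingHom.mem_ker.1 ha, RingHom.mem_ker.1 hb, mul_zero, zero_mul, add_zero]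
  · rw [map_add, ha, hb, add_zero]

end Tangent

theorem JIdGen_le_ker_evalAt_one {G : Type*} [Group G] {m n : ℕ} (x : Fin n → G) :
    JIdGen m n x ≤ RingHom.ker (evalAt (1 : SLRep G m)) :=
  Ideal.span_le.2 fun _ ⟨i, j, l, h⟩ => by simp [h]

section OneParameter

variable {ι : Type*} [Fintype ι] [DecidableEq ι] {G : Type*} [Group G]
  (φ : AddChar ℂ (Matrix.SpecialLinearGroup ι ℂ)) (χ : G →* Multiplicative ℂ)

noncomputable def oneParamRep (z : ℂ) : G →* Matrix.SpecialLinearGroup ι ℂ :=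
  φ.toMonoidHom.comp ((AddMonoidHom.mulLeft z).toMultiplicative.comp χ)

theorem oneParamRep_apply (z : ℂ) (g : G) :
    oneParamRep φ χ z g = φ (z * (χ g).toAdd) := rfl

theorem oneParamRep_zero : oneParamRep φ χ 0 = 1 := by
  ext g : 1
  simp [oneParamRep_apply]

variable {φ} {A : Matrix ι ι ℂ}
  (hφ : ∀ a b, HasDerivAt (fun t => (φ t : Matrix ι ι ℂ) a b) (A a b) 0)
include hφ

theorem hasDerivAt_oneParamRep (g : G) (a b : ι) :
    HasDerivAt (fun z => (oneParamRep φ χ z g : Matrix ι ι ℂ) a b) ((χ g).toAdd * A a b) 0 := by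
  rw [mul_comm]
  exact (hφ a b).comp_of_eq 0 (hasDerivAt_mul_const _) (zero_mul _).symm

end OneParameter

theorem derivAlong_oneParamRep_sEl {G : Type*} [Group G] {m : ℕ}
    {φ : AddChar ℂ (Matrix.SpecialLinearGroup (Fin m) ℂ)} {A : Matrix (Fin m) (Fin m) ℂ}
    (hφ : ∀ a b, HasDerivAt (fun t => (φ t : Matrix (Fin m) (Fin m) ℂ) a b) (A a b) 0)
    (χ : G →* Multiplicative ℂ) (i j : Fin m) (g : G) :
    derivAlong (oneParamRep φ χ)
        (fun g i j => (hasDerivAt_oneParamRep χ hφ g i j).differentiableAt) (sEl m i j g) =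
      (χ g).toAdd * A i j := by
  simp only [derivAlong, LinearMap.coe_mk, AddHom.coe_mk, evalAt_sEl, Matrix.sub_apply]
  exact ((hasDerivAt_oneParamRep χ hφ g i j).sub_const _).deriv

section OneParameterSubgroups

variable {ι : Type*} [Fintype ι] [DecidableEq ι]

noncomputable def transvectionAddChar {i j : ι} (h : i ≠ j) :
    AddChar ℂ (Matrix.SpecialLinearGroup ι ℂ) where
  toFun t := ⟨Matrix.transvection i j t, Matrix.det_transvection_of_ne i j h t⟩
  map_zero_eq_one' := Subtype.ext (Matrix.transvection_zero i j)
  map_add_eq_mul' s t := Subtype.ext (Matrix.transvection_mul_transvection_same i j h s t).symm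

theorem coe_transvectionAddChar {i j : ι} (h : i ≠ j) (t : ℂ) :
    (transvectionAddChar h t : Matrix ι ι ℂ) = Matrix.transvection i j t := rfl

theorem hasDerivAt_transvectionAddChar {i j : ι} (h : i ≠ j) (a b : ι) :
    HasDerivAt (fun t => (transvectionAddChar h t : Matrix ι ι ℂ) a b)
      (Matrix.single i j 1 a b) 0 := by
  simp only [coe_transvectionAddChar, Matrix.transvection, Matrix.add_apply, Matrix.single_apply]
  split_ifs
  · exact (hasDerivAt_id 0).const_add _
  · exact hasDerivAt_const _ _

noncomputable def diagonalExpAddChar (e : ι → ℂ) (he : ∑ k, e k = 0) :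
    AddChar ℂ (Matrix.SpecialLinearGroup ι ℂ) where
  toFun t := ⟨Matrix.diagonal fun k => Complex.exp (t * e k), by
    rw [Matrix.det_diagonal, ← Complex.exp_sum, ← Finset.mul_sum, he, mul_zero, Complex.exp_zero]⟩
  map_zero_eq_one' := Subtype.ext (by simp)
  map_add_eq_mul' s t := Subtype.ext <| by
    change _ = Matrix.diagonal _ * Matrix.diagonal _
    simp [add_mul, Complex.exp_add]

theorem coe_diagonalExpAddChar (e : ι → ℂ) (he : ∑ k, e k = 0) (t : ℂ) :
    (diagonalExpAddChar e he t : Matrix ι ι ℂ) = Matrix.diagonal fun k => Complex.exp (t * e k) :=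
  rfl

theorem hasDerivAt_diagonalExpAddChar (e : ι → ℂ) (he : ∑ k, e k = 0) (a b : ι) :
    HasDerivAt (fun t => (diagonalExpAddChar e he t : Matrix ι ι ℂ) a b)
      (Matrix.diagonal e a b) 0 := by
  simp only [coe_diagonalExpAddChar, Matrix.diagonal_apply]
  split_ifs
  · simpa using ((hasDerivAt_id (0 : ℂ)).mul_const (e a)).cexp
  · exact hasDerivAt_const _ _

end OneParameterSubgroups

/-- The tangent vectors are `E_ij` for `i ≠ j` and `E_ii - E_mm` on the diagonal. -/
theorem exists_addChar_hasDerivAt {m : ℕ}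
    (q : {p : Fin m × Fin m // ((p.1 : ℕ), (p.2 : ℕ)) ≠ (m - 1, m - 1)}) :
    ∃ (φ : AddChar ℂ (Matrix.SpecialLinearGroup (Fin m) ℂ)) (A : Matrix (Fin m) (Fin m) ℂ),
      (∀ a b, HasDerivAt (fun t => (φ t : Matrix (Fin m) (Fin m) ℂ) a b) (A a b) 0) ∧
      ∀ q' : {p : Fin m × Fin m // ((p.1 : ℕ), (p.2 : ℕ)) ≠ (m - 1, m - 1)},
        A q'.1.1 q'.1.2 = if q' = q then 1 else 0 := by
  obtain ⟨⟨i, j⟩, hq⟩ := q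
  by_cases hij : i = j
  · subst hij
    set L : Fin m := ⟨m - 1, Nat.sub_lt i.pos one_pos⟩
    have hiL : i ≠ L := fun h => hq (by simp [h, L])
    let e : Fin m → ℂ := Pi.single i 1 - Pi.single L 1
    have he : ∑ k, e k = 0 := by simp [e, Finset.sum_sub_distrib]
    refine ⟨diagonalExpAddChar e he, Matrix.diagonal e,
      hasDerivAt_diagonalExpAddChar e he, ?_⟩
    rintro ⟨⟨a, b⟩, hq'⟩
    by_cases hab : a = b
    · subst hab
      have haL : a ≠ L := fun h => hq' (by simp [h, L])
      simp [e, Pi.single_apply, haL, Subtype.ext_iff]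
    · simp only [Matrix.diagonal_apply_ne _ hab, Subtype.ext_iff, Prod.ext_iff]
      exact (if_neg fun h => hab (h.1.trans h.2.symm)).symm
  · refine ⟨transvectionAddChar hij, Matrix.single i j 1, hasDerivAt_transvectionAddChar hij, ?_⟩
    rintro ⟨⟨a, b⟩, hq'⟩
    simp [Matrix.single_apply, Subtype.ext_iff, Prod.ext_iff, eq_comm]

section FreeAbelian

variable {m n : ℕ}

theorem closure_range_xH : Subgroup.closure (Set.range (xH n)) = ⊤ := by
  refine eq_top_iff.2 fun v _ => ?_
  have hv : v = ∏ l, xH n l ^ v.toAdd l := by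
    apply Multiplicative.toAdd.injective
    ext t
    simp [xH, toAdd_prod, Pi.single_apply]
  rw [hv]
  exact Subgroup.prod_mem _ fun l _ =>
    Subgroup.zpow_mem _ (Subgroup.subset_closure (Set.mem_range_self l)) _

noncomputable def coordChar (l : Fin n) : FreeAb n →* Multiplicative ℂ :=
  AddMonoidHom.toMultiplicative ((Int.castAddHom ℂ).comp (Pi.evalAddMonoidHom (fun _ => ℤ) l))

theorem coordChar_xH (l l' : Fin n) :
    (coordChar l' (xH n l)).toAdd = if l = l' then 1 else 0 := by
  simp [coordChar, xH, Pi.single_apply, eq_comm]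

theorem coeff_eq_zero_of_sum_smul_mem_sq (c : Eidx m n → ℚ)
    (hc : ∑ p : Eidx m n, c p • sEl m p.1.1.1 p.1.1.2 (xH n p.2) ∈ JIdGen m n (xH n) ^ 2)
    (p₀ : Eidx m n) : c p₀ = 0 := by
  obtain ⟨q, l₀⟩ := p₀
  obtain ⟨φ, A, hφ, hA⟩ := exists_addChar_hasDerivAt q
  have hsq : ∑ p : Eidx m n, c p • sEl m p.1.1.1 p.1.1.2 (xH n p.2) ∈
      RingHom.ker (evalAt (oneParamRep φ (coordChar l₀) 0)) ^ 2 := by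
    rw [oneParamRep_zero]
    exact Ideal.pow_right_mono (JIdGen_le_ker_evalAt_one _) 2 hc
  have hD := derivAlong_eq_zero_of_mem_sq _
    (fun g i j => (hasDerivAt_oneParamRep (coordChar l₀) hφ g i j).differentiableAt) hsq
  have hδ : ∀ p : Eidx m n, ((if p.2 = l₀ then (1 : ℂ) else 0) * if p.1 = q then 1 else 0) =
      if p = (q, l₀) then 1 else 0 := by
    rintro ⟨q', l⟩
    by_cases hl : l = l₀ <;> by_cases hq : q' = q <;> simp [hl, hq]
  simp only [map_sum, map_smul, derivAlong_oneParamRep_sEl hφ, coordChar_xH, hA, hδ, smul_ite,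
    smul_zero, Finset.sum_ite_eq', Finset.mem_univ, if_true, Rat.smul_one_eq_cast] at hD
  exact_mod_cast hD

end FreeAbelian

theorem card_Eidx (m n : ℕ) : Fintype.card (Eidx m n) = (m ^ 2 - 1) * n := by
  rw [Fintype.card_prod, Fintype.card_fin, Fintype.card_subtype_compl, Fintype.card_prod,
    Fintype.card_fin, sq]
  rcases Nat.eq_zero_or_pos m with rfl | hm
  · simp
  have hcorner :
      Fintype.card {p : Fin m × Fin m // ((p.1 : ℕ), (p.2 : ℕ)) = (m - 1, m - 1)} = 1 := by
    refine Fintype.card_eq_one_iff.2 ⟨⟨(⟨m - 1, by omega⟩, ⟨m - 1, by omega⟩), rfl⟩, ?_⟩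
    rintro ⟨⟨a, b⟩, h⟩
    simp only [Prod.mk.injEq] at h
    simp [Subtype.ext_iff, Prod.ext_iff, Fin.ext_iff, h]
  rw [hcorner]

theorem gr1_basis_free_abelian_general (m n : ℕ) :
    (∀ c : Eidx m n → ℚ,
      (∑ p : Eidx m n, c p • sEl m p.1.1.1 p.1.1.2 (xH n p.2)) ∈ JIdGen m n (xH n) ^ 2 →
      ∀ p : Eidx m n, c p = 0) ∧
    ((JIdGen m n (xH n) : Submodule (RepAlg (FreeAb n) m) (RepAlg (FreeAb n) m)).restrictScalars ℚ ≤
      Submodule.span ℚ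
        (Set.range fun p : Eidx m n => sEl m p.1.1.1 p.1.1.2 (xH n p.2))
        ⊔ (JIdGen m n (xH n) ^ 2).restrictScalars ℚ) ∧
    (Module.finrank ℚ
        ((JIdGen m n (xH n)).map (Ideal.Quotient.mk (JIdGen m n (xH n) ^ 2)) |>.restrictScalars ℚ) =
      (m ^ 2 - 1) * n) := by
  have hspan := JIdGen_le_span_sup_sq (m := m) (closure_range_xH (n := n))
  refine ⟨coeff_eq_zero_of_sum_smul_mem_sq, hspan, ?_⟩
  rw [Ideal.finrank_map_quotient_sq _ (fun _ => sEl_mem_JIdGen closure_range_xH _ _ _)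
    coeff_eq_zero_of_sum_smul_mem_sq hspan, card_Eidx]

/-- for the free abelian group `H` of rank `n`, the classes of the
`s_{ij}(x̄_l)` with `(i,j) ≠ (m,m)` form a ℚ-basis of `gr¹(𝔍_H) = 𝔍_H/𝔍_H²`: they are
linearly independent modulo `𝔍_H²`, they span `𝔍_H` modulo `𝔍_H²`, and
`dim_ℚ gr¹(𝔍_H) = (m²−1)n`. -/
theorem gr1_basis_free_abelian (m n : ℕ) (hm : 2 ≤ m) (hn : 1 ≤ n) :
    (∀ c : Eidx m n → ℚ,
      (∑ p : Eidx m n, c p • sEl m p.1.1.1 p.1.1.2 (xH n p.2)) ∈ JIdGen m n (xH n) ^ 2 →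
      ∀ p : Eidx m n, c p = 0) ∧
    ((JIdGen m n (xH n) : Submodule (RepAlg (FreeAb n) m) (RepAlg (FreeAb n) m)).restrictScalars ℚ ≤
      Submodule.span ℚ
        (Set.range fun p : Eidx m n => sEl m p.1.1.1 p.1.1.2 (xH n p.2))
        ⊔ (JIdGen m n (xH n) ^ 2).restrictScalars ℚ) ∧
    (Module.finrank ℚ
        ((JIdGen m n (xH n)).map (Ideal.Quotient.mk (JIdGen m n (xH n) ^ 2)) |>.restrictScalars ℚ) =
      (m ^ 2 - 1) * n) :=
  gr1_basis_free_abelian_general m n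
end
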